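/- Let μ ∈ Δ(X×A) be any probability distribution (not necessarily an occupancy measure) and π_μ the induced policy π_μ(a|x) = μ(x,a)/Σ_{a'} μ(x,a'). For any cost vector c, the value function V_c^{π_μ} satisfies ⟨μ, c - T*_γ V_c^{π_μ}⟩ = 0. -/

import Mathlib

open Finset

variable {X A : Type*} [Fintype X] [Fintype A] [DecidableEq X] [DecidableEq A]
  [Nonempty X] [Nonempty A]

/-- A finite discounted Markov decision process. -/
structure FinMDP (X A : Type*) [Fintype X] [Fintype A] where
  P : X → A → X → ℝ
  P_nonneg : ∀ x a x', 0 ≤ P x a x'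
  P_sum : ∀ x a, ∑ x', P x a x' = 1
  ν : X → ℝ
  ν_nonneg : ∀ x, 0 ≤ ν x
  ν_sum : ∑ x, ν x = 1
  γ : ℝ
  γ_pos : 0 < γ
  γ_lt_one : γ < 1

/-- A stationary Markov policy. -/
def FinMDP.IsPolicy (π : X → A → ℝ) : Prop :=
  (∀ x a, 0 ≤ π x a) ∧ ∀ x, ∑ a, π x a = 1

namespace FinMDP

variable (M : FinMDP X A)

/-- The state-action distribution at time `t` of policy `π` started from `ν'`. -/
noncomputable def saDist (ν' : X → ℝ) (π : X → A → ℝ) : ℕ → X × A → ℝ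
  | 0 => fun p => ν' p.1 * π p.1 p.2
  | t + 1 => fun p => (∑ q : X × A, saDist ν' π t q * M.P q.1 q.2 p.1) * π p.1 p.2

/-- The normalized discounted occupancy measure of `π` started from `ν'`. -/
noncomputable def occFrom (ν' : X → ℝ) (π : X → A → ℝ) (p : X × A) : ℝ :=
  (1 - M.γ) * ∑' t : ℕ, M.γ ^ t * M.saDist ν' π t p

/-- The normalized discounted occupancy measure of `π` (from the initial distribution). -/
noncomputable def occ (π : X → A → ℝ) : X × A → ℝ :=
  M.occFrom M.ν π

/-- The (normalized) value function of policy `π` for cost `c`. -/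
noncomputable def value (c : X × A → ℝ) (π : X → A → ℝ) (x : X) : ℝ :=
  ∑ p : X × A, M.occFrom (fun y => if y = x then 1 else 0) π p * c p

/-- The total expected (normalized) discounted cost `ρ_c(π) = ⟨μ_π, c⟩`. -/
noncomputable def cost (c : X × A → ℝ) (π : X → A → ℝ) : ℝ :=
  ∑ p : X × A, M.occ π p * c p

/-- The Bellman flow operator `T_γ μ = (1/(1-γ)) (B - γ P)ᵀ μ`. -/
noncomputable def Tflow (μ : X × A → ℝ) (x' : X) : ℝ :=
  (1 / (1 - M.γ)) * ((∑ a, μ (x', a)) - M.γ * ∑ p : X × A, μ p * M.P p.1 p.2 x')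

/-- The adjoint operator `T*_γ u = (1/(1-γ)) (B - γ P) u`. -/
noncomputable def Tadj (u : X → ℝ) (p : X × A) : ℝ :=
  (1 / (1 - M.γ)) * (u p.1 - M.γ * ∑ x', M.P p.1 p.2 x' * u x')

/-- `π` is an optimal policy for the forward RL problem with cost `c`. -/
def IsOptimal (c : X × A → ℝ) (π : X → A → ℝ) : Prop :=
  IsPolicy π ∧ ∀ π', IsPolicy π' → M.cost c π ≤ M.cost c π'

/-- The optimal value function `V*_c(x) = min_π V_c^π(x)`. -/
noncomputable def Vstar (c : X × A → ℝ) (x : X) : ℝ :=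
  sInf {v | ∃ π, IsPolicy π ∧ v = M.value c π x}

end FinMDP

/-- The policy induced by a state-action distribution:
`π_μ(a|x) = μ(x,a) / ∑_{a'} μ(x,a')` (uniform on zero-mass states). -/
noncomputable def inducedPolicy (μ : X × A → ℝ) (x : X) (a : A) : ℝ :=
  if (∑ a' : A, μ (x, a')) = 0 then (1 : ℝ) / (Fintype.card A)
  else μ (x, a) / ∑ a' : A, μ (x, a')

/-- `μ` is a probability distribution on state-action pairs. -/
def IsDist (μ : X × A → ℝ) : Prop := (∀ p, 0 ≤ μ p) ∧ ∑ p : X × A, μ p = 1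

/-- Membership in the probability simplex `Δ_{[n]}`. -/
def simplexPt {n : ℕ} (w : Fin n → ℝ) : Prop := (∀ i, 0 ≤ w i) ∧ ∑ i, w i = 1

/-- The `ℓ¹` norm of a finitely supported vector. -/
noncomputable def l1 {ι : Type*} [Fintype ι] (f : ι → ℝ) : ℝ := ∑ i, |f i|

/-- The `ℓ∞` norm of a finitely supported vector. -/
noncomputable def linf {ι : Type*} [Fintype ι] [Nonempty ι] (f : ι → ℝ) : ℝ :=
  Finset.univ.sup' Finset.univ_nonempty fun i => |f i|

/-- The cost `c_w = ∑ᵢ wᵢ cᵢ` parameterized by weights `w`. -/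
noncomputable def costW {nc : ℕ} (c : Fin nc → X × A → ℝ) (w : Fin nc → ℝ) :
    X × A → ℝ :=
  fun p => ∑ i, w i * c i p

/-- The objective of the dual LP `(D_{π_E})`. -/
noncomputable def dualObj {nc : ℕ} (M : FinMDP X A) (c : Fin nc → X × A → ℝ)
    (πE : X → A → ℝ) (u : X → ℝ) (w : Fin nc → ℝ) : ℝ :=
  ∑ p : X × A, M.occ πE p * (M.Tadj u p - costW c w p)

/-- Feasibility for the dual LP `(D_{π_E})`. -/
def dualFeasible {nc : ℕ} (M : FinMDP X A) (c : Fin nc → X × A → ℝ)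
    (u : X → ℝ) (w : Fin nc → ℝ) : Prop :=
  simplexPt w ∧ ∀ p, 0 ≤ costW c w p - M.Tadj u p

/-- Optimality for the dual LP `(D_{π_E})`. -/
def dualOptimal {nc : ℕ} (M : FinMDP X A) (c : Fin nc → X × A → ℝ)
    (πE : X → A → ℝ) (u : X → ℝ) (w : Fin nc → ℝ) : Prop :=
  dualFeasible M c u w ∧
    ∀ u' w', dualFeasible M c u' w' → dualObj M c πE u' w' ≤ dualObj M c πE u w

/-- The `C`-distance `δ_C(π, π_E) = max_i (ρ_{c_i}(π) - ρ_{c_i}(π_E))`. -/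
noncomputable def gapMax {nc : ℕ} [NeZero nc] (M : FinMDP X A)
    (c : Fin nc → X × A → ℝ) (πE π : X → A → ℝ) : ℝ :=
  haveI : Nonempty (Fin nc) := ⟨⟨0, Nat.pos_of_ne_zero (NeZero.ne nc)⟩⟩
  Finset.univ.sup' Finset.univ_nonempty fun i => M.cost (c i) π - M.cost (c i) πE

/-- `π_A` is an apprentice policy: it minimizes `δ_C(·, π_E)` over stationary policies. -/
def IsApprentice {nc : ℕ} [NeZero nc] (M : FinMDP X A)
    (c : Fin nc → X × A → ℝ) (πE πA : X → A → ℝ) : Prop :=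
  FinMDP.IsPolicy πA ∧
    ∀ π, FinMDP.IsPolicy π → gapMax M c πE πA ≤ gapMax M c πE π

/-- The parameter set `Λ = {λ : ‖λ‖₂ ≤ β/√n_u}`. -/
def lamSet (nu : ℕ) (β : ℝ) : Set (Fin nu → ℝ) :=
  {l | Real.sqrt (∑ k, l k ^ 2) ≤ β / Real.sqrt nu}

/-- The reduced Lagrangian `L_r(θ, λ, w) = ⟨μ_θ - μ_{π_E}, c_w - T*_γ u_λ⟩`. -/
noncomputable def Lr {nm nu nc : ℕ} (M : FinMDP X A)
    (Φ : Fin nm → X × A → ℝ) (Ψ : Fin nu → X → ℝ) (c : Fin nc → X × A → ℝ)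
    (πE : X → A → ℝ) (θ : Fin nm → ℝ) (lam : Fin nu → ℝ) (w : Fin nc → ℝ) : ℝ :=
  ∑ p : X × A, ((∑ i, θ i * Φ i p) - M.occ πE p) *
    ((∑ j, w j * c j p) - M.Tadj (fun x => ∑ k, lam k * Ψ k x) p)

/-- The saddle-point residual of a point `(θ, λ, w)` for the reduced Lagrangian. -/
noncomputable def epsSad {nm nu nc : ℕ} (M : FinMDP X A)
    (Φ : Fin nm → X × A → ℝ) (Ψ : Fin nu → X → ℝ) (c : Fin nc → X × A → ℝ)
    (πE : X → A → ℝ) (β : ℝ)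
    (θ : Fin nm → ℝ) (lam : Fin nu → ℝ) (w : Fin nc → ℝ) : ℝ :=
  sSup {v | ∃ lam' ∈ lamSet nu β, ∃ w', simplexPt w' ∧ v = Lr M Φ Ψ c πE θ lam' w'} -
    sInf {v | ∃ θ', simplexPt θ' ∧ v = Lr M Φ Ψ c πE θ' lam w}

/-!
Since `μ (x, a) = (∑ a', μ (x, a')) * π_μ(a|x)` (both sides vanish on states of mass zero),
the pairing splits into state-wise `π_μ`-averages of `c - T*_γ V` with `V = V_c^{π_μ}`.
Each average vanishes by the Bellman equation for `V`, which in turn comes from splitting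
off the `t = 0` term of the occupancy series and using that the chain started at `x` is,
one step later, the mixture over `x'` of the chains started at `x'`.
-/

set_option linter.unusedSectionVars false

namespace FinMDP

variable (M : FinMDP X A)

theorem saDist_succ_eq_saDist_next (ν : X → ℝ) (π : X → A → ℝ) (t : ℕ) :
    M.saDist ν π (t + 1) =
      M.saDist (fun x' => ∑ q : X × A, M.saDist ν π 0 q * M.P q.1 q.2 x') π t := by
  induction t with
  | zero => rfl
  | succ t ih => funext p; rw [saDist.eq_2, ih, saDist.eq_2]

theorem saDist_eq_sum_dirac (ν : X → ℝ) (π : X → A → ℝ) (t : ℕ) (p : X × A) :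
    M.saDist ν π t p = ∑ x, ν x * M.saDist (fun y => if y = x then 1 else 0) π t p := by
  induction t generalizing p with
  | zero => simp [saDist]
  | succ t ih =>
    simp only [saDist, ih, Finset.sum_mul, Finset.mul_sum, mul_assoc]
    rw [Finset.sum_comm]

theorem saDist_dirac_succ (π : X → A → ℝ) (x : X) (t : ℕ) (p : X × A) :
    M.saDist (fun y => if y = x then 1 else 0) π (t + 1) p =
      ∑ x', (∑ a, π x a * M.P x a x') * M.saDist (fun y => if y = x' then 1 else 0) π t p := by
  have hnext : (fun x' => ∑ q : X × A,
      M.saDist (fun y => if y = x then 1 else 0) π 0 q * M.P q.1 q.2 x') =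
      fun x' => ∑ a, π x a * M.P x a x' := by
    funext x'
    simp [saDist, Fintype.sum_prod_type]
  rw [saDist_succ_eq_saDist_next, hnext, saDist_eq_sum_dirac]

theorem sum_saDist {π : X → A → ℝ} (hπ : ∀ x, ∑ a, π x a = 1) (ν : X → ℝ) (t : ℕ) :
    ∑ p : X × A, M.saDist ν π t p = ∑ x, ν x := by
  induction t with
  | zero => simp [saDist, Fintype.sum_prod_type, ← Finset.mul_sum, hπ]
  | succ t ih =>
    rw [← ih]
    simp only [saDist]
    rw [Fintype.sum_prod_type]
    simp only [← Finset.mul_sum, hπ, mul_one]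
    rw [Finset.sum_comm]
    simp only [← Finset.mul_sum, M.P_sum, mul_one]

theorem saDist_nonneg {ν : X → ℝ} (hν : ∀ x, 0 ≤ ν x) {π : X → A → ℝ}
    (hπ : ∀ x a, 0 ≤ π x a) (t : ℕ) (p : X × A) : 0 ≤ M.saDist ν π t p := by
  induction t generalizing p with
  | zero => exact mul_nonneg (hν _) (hπ _ _)
  | succ t ih =>
    exact mul_nonneg (Finset.sum_nonneg fun q _ => mul_nonneg (ih q) (M.P_nonneg _ _ _)) (hπ _ _)

theorem summable_saDist {ν : X → ℝ} (hν : ∀ x, 0 ≤ ν x) {π : X → A → ℝ} (hπ : IsPolicy π)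
    (p : X × A) : Summable fun t => M.γ ^ t * M.saDist ν π t p := by
  have hγ := M.γ_pos.le
  refine Summable.of_nonneg_of_le
    (fun t => mul_nonneg (pow_nonneg hγ t) (M.saDist_nonneg hν hπ.1 t p)) (fun t => ?_)
    ((summable_geometric_of_lt_one hγ M.γ_lt_one).mul_right (∑ x, ν x))
  rw [← M.sum_saDist hπ.2 ν t]
  exact mul_le_mul_of_nonneg_left
    (Finset.single_le_sum (fun q _ => M.saDist_nonneg hν hπ.1 t q) (Finset.mem_univ p))
    (pow_nonneg hγ t)

theorem occFrom_dirac_bellman {π : X → A → ℝ} (hπ : IsPolicy π) (x : X) (p : X × A) :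
    M.occFrom (fun y => if y = x then 1 else 0) π p =
      (1 - M.γ) * M.saDist (fun y => if y = x then 1 else 0) π 0 p +
        M.γ * ∑ x', (∑ a, π x a * M.P x a x') *
          M.occFrom (fun y => if y = x' then 1 else 0) π p := by
  have hdirac (x' : X) : ∀ y : X, 0 ≤ if y = x' then (1 : ℝ) else 0 := fun y => by positivity
  have htail : ∑' t, M.γ ^ (t + 1) * M.saDist (fun y => if y = x then 1 else 0) π (t + 1) p =
      M.γ * ∑ x', (∑ a, π x a * M.P x a x') *
        ∑' t, M.γ ^ t * M.saDist (fun y => if y = x' then 1 else 0) π t p := by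
    simp_rw [M.saDist_dirac_succ, Finset.mul_sum, pow_succ]
    rw [Summable.tsum_finsetSum fun x' _ => ?_]
    · refine Finset.sum_congr rfl fun x' _ => ?_
      rw [← tsum_mul_left, ← tsum_mul_left]
      exact tsum_congr fun t => by ring
    · simpa only [mul_assoc, mul_left_comm] using
        ((M.summable_saDist (hdirac x') hπ p).mul_left (M.γ * ∑ a, π x a * M.P x a x'))
  simp only [occFrom]
  rw [(M.summable_saDist (hdirac x) hπ p).tsum_eq_zero_add, htail]
  simp only [pow_zero, one_mul, mul_add, Finset.mul_sum]
  congr 1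
  exact Finset.sum_congr rfl fun _ _ => by ring

theorem value_bellman (c : X × A → ℝ) {π : X → A → ℝ} (hπ : IsPolicy π) (x : X) :
    M.value c π x = (1 - M.γ) * ∑ a, π x a * c (x, a) +
      M.γ * ∑ a, π x a * ∑ x', M.P x a x' * M.value c π x' := by
  rw [value, Finset.sum_congr rfl fun p _ => by rw [M.occFrom_dirac_bellman hπ x p]]
  simp only [add_mul, Finset.sum_add_distrib]
  congr 1
  · simp [saDist, Fintype.sum_prod_type, Finset.mul_sum, mul_assoc]
  · simp only [value, Finset.mul_sum, Finset.sum_mul, mul_assoc]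
    rw [Finset.sum_comm]
    exact (Finset.sum_congr rfl fun _ _ => Finset.sum_comm).trans Finset.sum_comm

theorem sum_mul_sub_Tadj_value_eq_zero (c : X × A → ℝ) {π : X → A → ℝ} (hπ : IsPolicy π)
    (x : X) : ∑ a, π x a * (c (x, a) - M.Tadj (M.value c π) (x, a)) = 0 := by
  have hγ : 1 - M.γ ≠ 0 := (sub_pos.2 M.γ_lt_one).ne'
  have hpointwise (a : A) : π x a * (c (x, a) - M.Tadj (M.value c π) (x, a)) =
      π x a * c (x, a) - 1 / (1 - M.γ) * (π x a * M.value c π x -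
        M.γ * (π x a * ∑ x', M.P x a x' * M.value c π x')) := by
    unfold Tadj; ring
  rw [Finset.sum_congr rfl fun a _ => hpointwise a, Finset.sum_sub_distrib, ← Finset.mul_sum,
    Finset.sum_sub_distrib, ← Finset.sum_mul, ← Finset.mul_sum, hπ.2 x, one_mul,
    M.value_bellman c hπ x]
  field_simp
  ring

end FinMDP

theorem inducedPolicy_isPolicy {μ : X × A → ℝ} (hμ : ∀ p, 0 ≤ μ p) :
    FinMDP.IsPolicy (inducedPolicy μ) := by
  refine ⟨fun x a => ?_, fun x => ?_⟩ <;> unfold inducedPolicy <;> split_ifs with h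
  · positivity
  · exact div_nonneg (hμ _) (Finset.sum_nonneg fun a' _ => hμ _)
  · simp
  · rw [← Finset.sum_div, div_self h]

theorem sum_mul_inducedPolicy {μ : X × A → ℝ} (hμ : ∀ p, 0 ≤ μ p) (x : X) (a : A) :
    (∑ a', μ (x, a')) * inducedPolicy μ x a = μ (x, a) := by
  unfold inducedPolicy
  split_ifs with h
  · rw [h, zero_mul]
    exact ((Finset.sum_eq_zero_iff_of_nonneg fun a' _ => hμ (x, a')).1 h a
      (Finset.mem_univ a)).symm
  · exact mul_div_cancel₀ _ h

/-- For any distribution `μ ∈ Δ(X×A)` (not necessarily an occupancy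
measure) and any cost `c`, the value function of the induced policy `π_μ` satisfies
`⟨μ, c - T*_γ V_c^{π_μ}⟩ = 0`. -/
theorem induced_policy_advantage_orthogonality (M : FinMDP X A)
    (μ : X × A → ℝ) (hμ : IsDist μ) (c : X × A → ℝ) :
    ∑ p : X × A, μ p * (c p - M.Tadj (M.value c (inducedPolicy μ)) p) = 0 := by
  calc ∑ p : X × A, μ p * (c p - M.Tadj (M.value c (inducedPolicy μ)) p)
      = ∑ x, (∑ a', μ (x, a')) * ∑ a, inducedPolicy μ x a *
          (c (x, a) - M.Tadj (M.value c (inducedPolicy μ)) (x, a)) := by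
        simp only [Fintype.sum_prod_type, Finset.mul_sum, ← mul_assoc,
          sum_mul_inducedPolicy hμ.1]
    _ = 0 := by
        simp [M.sum_mul_sub_Tadj_value_eq_zero c (inducedPolicy_isPolicy hμ.1)]
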